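/- arXiv:1011.6287 — 3 statements merged into one kernel-verified Lean document; each statement's English description precedes it below -/
import Mathlib

section
/- The linear functional τ(F) = ∫₀¹∫₀¹ F(0,x,y) dy dx is a trace for the convolution product (F₁·F₂)(p,x,y) = Σ_q F₁(q,x,y)F₂(p-q, x-2qμ, y-2qν): τ(F₁·F₂) = τ(F₂·F₁), and it is invariant under the Heisenberg group action α_{(r,s,t)}(F)(p,x,y) = e^{2πi p(t + cs(x-r))}F(p,x-r,y-s): τ(α_g(F)) = τ(F). -/
open Complex Real MeasureTheory

noncomputable def conv (μ ν : ℝ) (F G : ℤ → ℝ → ℝ → ℂ) : ℤ → ℝ → ℝ → ℂ :=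
  fun p x y => ∑' q : ℤ, F q x y * G (p - q) (x - 2 * q * μ) (y - 2 * q * ν)

noncomputable def heisAct (c : ℤ) (g : ℝ × ℝ × ℝ) (F : ℤ → ℝ → ℝ → ℂ) :
    ℤ → ℝ → ℝ → ℂ :=
  fun p x y =>
    Complex.exp (2 * π * I * p * (g.2.2 + c * g.2.1 * (x - g.1))) * F p (x - g.1) (y - g.2.1)

/-- The trace `τ(F) = ∫₀¹∫₀¹ F(0,x,y) dy dx`. -/
noncomputable def qhmTrace (F : ℤ → ℝ → ℝ → ℂ) : ℂ :=
  ∫ x in (0:ℝ)..1, ∫ y in (0:ℝ)..1, F 0 x y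

def InD0 (c : ℤ) (ν : ℝ) (F : ℤ → ℝ → ℝ → ℂ) : Prop :=
  (Function.support F).Finite ∧
  (∀ p, ContDiff ℝ (⊤ : ℕ∞) (fun q : ℝ × ℝ => F p q.1 q.2)) ∧
  (∀ p x y, F p (x + 1) y = Complex.exp (-2 * π * I * c * p * (y - p * ν)) * F p x y) ∧
  (∀ p x y, F p x (y + 1) = F p x y)

lemma shift1 {h : ℝ → ℂ} (hp : Function.Periodic h 1) (b : ℝ) :
    (∫ y in (0:ℝ)..1, h (y - b)) = ∫ y in (0:ℝ)..1, h y := by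
  rw [intervalIntegral.integral_comp_sub_right]
  have := hp.intervalIntegral_add_eq (0 - b) 0
  rw [show (0:ℝ) - b + 1 = 1 - b by ring, zero_add] at this
  exact this

lemma shift2 {H : ℝ → ℝ → ℂ} (_hc : Continuous fun q : ℝ × ℝ => H q.1 q.2)
    (hx : ∀ x y, H (x + 1) y = H x y) (hy : ∀ x y, H x (y + 1) = H x y) (a b : ℝ) :
    (∫ x in (0:ℝ)..1, ∫ y in (0:ℝ)..1, H (x - a) (y - b))
      = ∫ x in (0:ℝ)..1, ∫ y in (0:ℝ)..1, H x y := by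
  have step1 : ∀ t : ℝ, (∫ y in (0:ℝ)..1, H t (y - b)) = ∫ y in (0:ℝ)..1, H t y :=
    fun t => shift1 (fun y => hy t y) b
  calc (∫ x in (0:ℝ)..1, ∫ y in (0:ℝ)..1, H (x - a) (y - b))
      = ∫ x in (0:ℝ)..1, (fun t => ∫ y in (0:ℝ)..1, H t y) (x - a) :=
        intervalIntegral.integral_congr fun x _ => step1 (x - a)
    _ = ∫ x in (0:ℝ)..1, ∫ y in (0:ℝ)..1, H x y :=
        shift1 (h := fun t => ∫ y in (0:ℝ)..1, H t y)
          (fun t => intervalIntegral.integral_congr fun y _ => hx t y) a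

lemma cont_uncurry_mul {A B : ℝ → ℝ → ℂ} (hA : Continuous fun q : ℝ × ℝ => A q.1 q.2)
    (hB : Continuous fun q : ℝ × ℝ => B q.1 q.2) (a b : ℝ) :
    Continuous fun q : ℝ × ℝ => A q.1 q.2 * B (q.1 - a) (q.2 - b) := by
  have h2 : Continuous fun q : ℝ × ℝ => B (q.1 - a) (q.2 - b) :=
    hB.comp ((continuous_fst.sub continuous_const).prodMk (continuous_snd.sub continuous_const))
  exact hA.mul h2

lemma exp_mul_cancel {E u : ℂ} (hE : E = 0) : Complex.exp E * u = u := by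
  rw [hE, Complex.exp_zero, one_mul]

lemma trace_conv_eq (c : ℤ) (μ ν : ℝ) {F G : ℤ → ℝ → ℝ → ℂ}
    (hF : InD0 c ν F) (hG : InD0 c ν G) (s : Finset ℤ) (hs : ∀ q, F q ≠ 0 → q ∈ s) :
    qhmTrace (conv μ ν F G) =
      ∑ q ∈ s, ∫ x in (0:ℝ)..1, ∫ y in (0:ℝ)..1,
        F q x y * G (-q) (x - 2 * q * μ) (y - 2 * q * ν) := by
  have contT : ∀ q : ℤ, Continuous fun p : ℝ × ℝ =>
      F q p.1 p.2 * G (-q) (p.1 - 2 * q * μ) (p.2 - 2 * q * ν) :=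
    fun q => cont_uncurry_mul (hF.2.1 q).continuous (hG.2.1 (-q)).continuous _ _
  have h1 : ∀ x y : ℝ, (∑' q : ℤ, F q x y * G (0 - q) (x - 2 * q * μ) (y - 2 * q * ν))
      = ∑ q ∈ s, F q x y * G (-q) (x - 2 * q * μ) (y - 2 * q * ν) := by
    intro x y
    have h0 : ∀ q ∉ s, F q x y * G (0 - q) (x - 2 * q * μ) (y - 2 * q * ν) = 0 := by
      intro q hq
      have : F q = 0 := by_contra fun h => hq (hs q h)
      simp [this]
    rw [tsum_eq_sum h0]
    exact Finset.sum_congr rfl fun q _ => by rw [zero_sub]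
  have h2 : ∀ x : ℝ, (∫ y in (0:ℝ)..1,
        ∑ q ∈ s, F q x y * G (-q) (x - 2 * q * μ) (y - 2 * q * ν))
      = ∑ q ∈ s, ∫ y in (0:ℝ)..1, F q x y * G (-q) (x - 2 * q * μ) (y - 2 * q * ν) := by
    intro x
    refine intervalIntegral.integral_finset_sum fun q _ => ?_
    have hcy : Continuous fun y : ℝ => F q x y * G (-q) (x - 2 * q * μ) (y - 2 * q * ν) :=
      (contT q).comp (Continuous.prodMk_right x)
    exact hcy.intervalIntegrable 0 1
  show (∫ x in (0:ℝ)..1, ∫ y in (0:ℝ)..1,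
      ∑' q : ℤ, F q x y * G (0 - q) (x - 2 * q * μ) (y - 2 * q * ν)) = _
  simp only [h1, h2]
  refine intervalIntegral.integral_finset_sum fun q _ => ?_
  exact (intervalIntegral.continuous_parametric_intervalIntegral_of_continuous'
    (f := fun x y => F q x y * G (-q) (x - 2 * q * μ) (y - 2 * q * ν))
    (contT q) 0 1).intervalIntegrable 0 1

/-- `τ` is a trace for the convolution product and is invariant under
the Heisenberg group action. -/
theorem stmt9 (c : ℤ) (μ ν : ℝ) :
    (∀ F G : ℤ → ℝ → ℝ → ℂ, InD0 c ν F → InD0 c ν G →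
      qhmTrace (conv μ ν F G) = qhmTrace (conv μ ν G F)) ∧
    (∀ g : ℝ × ℝ × ℝ, ∀ F : ℤ → ℝ → ℝ → ℂ, InD0 c ν F →
      qhmTrace (heisAct c g F) = qhmTrace F) := by
  constructor
  · intro F G hF hG
    set I : ℤ → ℂ := fun q => ∫ x in (0:ℝ)..1, ∫ y in (0:ℝ)..1,
      F q x y * G (-q) (x - 2 * q * μ) (y - 2 * q * ν) with hI
    set J : ℤ → ℂ := fun q => ∫ x in (0:ℝ)..1, ∫ y in (0:ℝ)..1,
      G q x y * F (-q) (x - 2 * q * μ) (y - 2 * q * ν) with hJ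
    have hIzero : ∀ q, F q = 0 → I q = 0 := fun q h => by simp [hI, h]
    have hJzero : ∀ q, G q = 0 → J q = 0 := fun q h => by simp [hJ, h]
    have key : ∀ q : ℤ, J q = I (-q) := by
      intro q
      set H : ℝ → ℝ → ℂ := fun x y =>
        F (-q) x y * G (-(-q)) (x - 2 * ((-q : ℤ) : ℝ) * μ) (y - 2 * ((-q : ℤ) : ℝ) * ν) with hH
      have hHc : Continuous fun p : ℝ × ℝ => H p.1 p.2 :=
        cont_uncurry_mul (hF.2.1 (-q)).continuous (hG.2.1 (-(-q))).continuous _ _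
      have hHy : ∀ x y, H x (y + 1) = H x y := by
        intro x y
        simp only [hH]
        rw [show y + 1 - 2 * ((-q : ℤ) : ℝ) * ν = (y - 2 * ((-q : ℤ) : ℝ) * ν) + 1 by ring,
          hF.2.2.2, hG.2.2.2]
      have hHx : ∀ x y, H (x + 1) y = H x y := by
        intro x y
        simp only [hH]
        rw [show x + 1 - 2 * ((-q : ℤ) : ℝ) * μ = (x - 2 * ((-q : ℤ) : ℝ) * μ) + 1 by ring,
          hF.2.2.1, hG.2.2.1, mul_mul_mul_comm, ← Complex.exp_add]
        exact exp_mul_cancel (by push_cast; ring)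
      have hq : J q = ∫ x in (0:ℝ)..1, ∫ y in (0:ℝ)..1,
          H (x - 2 * (q : ℝ) * μ) (y - 2 * (q : ℝ) * ν) := by
        refine intervalIntegral.integral_congr fun x _ => ?_
        refine intervalIntegral.integral_congr fun y _ => ?_
        simp only [hH, hJ, neg_neg, Int.cast_neg]
        rw [show x - 2 * (q : ℝ) * μ - 2 * (-(q : ℝ)) * μ = x by ring,
          show y - 2 * (q : ℝ) * ν - 2 * (-(q : ℝ)) * ν = y by ring]
        ring
      rw [hq, shift2 hHc hHx hHy]
    have hIF : qhmTrace (conv μ ν F G) = ∑' q : ℤ, I q := by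
      rw [trace_conv_eq c μ ν hF hG hF.1.toFinset
        (fun q h => hF.1.mem_toFinset.mpr h)]
      exact (tsum_eq_sum (fun q hq => hIzero q
        (by by_contra h; exact hq (hF.1.mem_toFinset.mpr h)))).symm
    have hJG : qhmTrace (conv μ ν G F) = ∑' q : ℤ, J q := by
      rw [trace_conv_eq c μ ν hG hF hG.1.toFinset
        (fun q h => hG.1.mem_toFinset.mpr h)]
      exact (tsum_eq_sum (fun q hq => hJzero q
        (by by_contra h; exact hq (hG.1.mem_toFinset.mpr h)))).symm
    rw [hIF, hJG]
    calc (∑' q : ℤ, I q) = ∑' q : ℤ, I (-q) := ((Equiv.neg ℤ).tsum_eq I).symm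
      _ = ∑' q : ℤ, J q := tsum_congr fun q => (key q).symm
  · intro g F hF
    show (∫ x in (0:ℝ)..1, ∫ y in (0:ℝ)..1,
      Complex.exp (2 * π * I * ((0:ℤ):ℂ) * (g.2.2 + c * g.2.1 * (x - g.1)))
        * F 0 (x - g.1) (y - g.2.1)) = _
    simp only [Int.cast_zero, mul_zero, zero_mul, Complex.exp_zero, one_mul]
    refine shift2 (hF.2.1 0).continuous (fun x y => ?_) (fun x y => hF.2.2.2 0 x y) g.1 g.2.1
    rw [hF.2.2.1 0 x y]
    simp
end

section
/- For the unitaries U₁(p,x,y) = δ_{0,p}e^{2πix} and U₂(p,x,y) = δ_{0,p}e^{2πiy} in the algebra D₀, the pairings with the 1-cocycles φⱼ(a₀,a₁) = τ(a₀∂ⱼ(a₁)) satisfy τ(Uᵢ* ∂ⱼ(Uᵢ)) = -2πi·δ_{i,j} for i ∈ {1,2}, j ∈ {1,2,3}. -/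
open Complex Real

/-- The involution `F*(p,x,y) = conj F(-p, x-2pμ, y-2pν)`. -/
noncomputable def inv0 (μ ν : ℝ) (F : ℤ → ℝ → ℝ → ℂ) : ℤ → ℝ → ℝ → ℂ :=
  fun p x y => (starRingEnd ℂ) (F (-p) (x - 2 * p * μ) (y - 2 * p * ν))

/-- The derivations `∂₁, ∂₂, ∂₃`. -/
noncomputable def del (c : ℤ) : Fin 3 → (ℤ → ℝ → ℝ → ℂ) → (ℤ → ℝ → ℝ → ℂ)
  | 0 => fun F p x y => -deriv (fun x' => F p x' y) x
  | 1 => fun F p x y =>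
      -deriv (fun y' => F p x y') y + (2 * π * I * p * c * x) * F p x y
  | 2 => fun F p x y => (2 * π * I * p) * F p x y

/-- The unitaries `U₁(p,x,y) = δ_{0,p}e^{2πix}` and `U₂(p,x,y) = δ_{0,p}e^{2πiy}`. -/
noncomputable def Ugen : Fin 2 → (ℤ → ℝ → ℝ → ℂ)
  | 0 => fun p x _ => if p = 0 then Complex.exp (2 * π * I * x) else 0
  | 1 => fun p _ y => if p = 0 then Complex.exp (2 * π * I * y) else 0

/-!
`Uᵢ` and hence `Uᵢ*` live in the fibre `p = 0`, so the convolution `Uᵢ* ∂ⱼ(Uᵢ)` at `p = 0` is the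
pointwise product `conj Uᵢ · ∂ⱼUᵢ`, which is all that `τ` sees. At `p = 0` the derivation `∂₃` and
the multiplication term of `∂₂` vanish, so `∂ⱼUᵢ` is `-2πi Uᵢ` when `∂ⱼ` differentiates in the
variable of the character `Uᵢ` and `0` otherwise. Since `|Uᵢ| = 1` the integrand is the constant
`-2πi δᵢⱼ`.
-/

open ComplexConjugate

def IsSupportedAtZero (F : ℤ → ℝ → ℝ → ℂ) : Prop :=
  ∀ p ≠ 0, ∀ x y, F p x y = 0

lemma IsSupportedAtZero.conv_apply_zero {F : ℤ → ℝ → ℝ → ℂ} (hF : IsSupportedAtZero F)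
    (μ ν : ℝ) (G : ℤ → ℝ → ℝ → ℂ) (x y : ℝ) :
    conv μ ν F G 0 x y = F 0 x y * G 0 x y := by
  rw [conv, tsum_eq_single 0 fun q hq => by rw [hF q hq, zero_mul]]
  simp

lemma isSupportedAtZero_inv0 {F : ℤ → ℝ → ℝ → ℂ} (hF : IsSupportedAtZero F) (μ ν : ℝ) :
    IsSupportedAtZero (inv0 μ ν F) := fun p hp x y => by
  rw [inv0, hF (-p) (neg_ne_zero.mpr hp), map_zero]

lemma inv0_apply_zero (μ ν : ℝ) (F : ℤ → ℝ → ℝ → ℂ) (x y : ℝ) :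
    inv0 μ ν F 0 x y = conj (F 0 x y) := by
  simp [inv0]

lemma isSupportedAtZero_Ugen (i : Fin 2) : IsSupportedAtZero (Ugen i) := fun p hp x y => by
  fin_cases i <;> simp [Ugen, hp]

lemma qhmTrace_eq_of_apply_zero {F : ℤ → ℝ → ℝ → ℂ} {a : ℂ} (h : ∀ x y, F 0 x y = a) :
    qhmTrace F = a := by
  simp [qhmTrace, h]

lemma deriv_cexp_mul_ofReal (a : ℂ) (t : ℝ) :
    deriv (fun s : ℝ => cexp (a * s)) t = a * cexp (a * t) := by
  have h : HasDerivAt (fun s : ℝ => a * (s : ℂ)) a t := by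
    simpa using (ofRealCLM.hasDerivAt (x := t)).const_mul a
  simpa [mul_comm] using h.cexp.deriv

lemma conj_cexp_mul_cexp_of_re_eq_zero {z : ℂ} (hz : z.re = 0) : conj (cexp z) * cexp z = 1 := by
  rw [← Complex.exp_conj, ← Complex.exp_add, ← Complex.exp_zero]
  congr 1
  apply Complex.ext <;> simp [hz]

lemma conj_Ugen_mul_self (i : Fin 2) (x y : ℝ) : conj (Ugen i 0 x y) * Ugen i 0 x y = 1 := by
  fin_cases i <;> simp [Ugen, conj_cexp_mul_cexp_of_re_eq_zero]

lemma del_Ugen_apply_zero (c : ℤ) (i : Fin 2) (j : Fin 3) (x y : ℝ) :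
    del c j (Ugen i) 0 x y = if (j : ℕ) = (i : ℕ) then -(2 * π * I) * Ugen i 0 x y else 0 := by
  fin_cases i <;> fin_cases j <;> simp [del, Ugen, deriv_cexp_mul_ofReal]

/-- `τ(Uᵢ* ∂ⱼ(Uᵢ)) = -2πi·δ_{i,j}` for `i ∈ {1,2}`, `j ∈ {1,2,3}`. -/
theorem stmt10 (c : ℤ) (μ ν : ℝ) (i : Fin 2) (j : Fin 3) :
    qhmTrace (conv μ ν (inv0 μ ν (Ugen i)) (del c j (Ugen i)))
      = if (j : ℕ) = (i : ℕ) then -(2 * π * I) else 0 := by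
  refine qhmTrace_eq_of_apply_zero fun x y => ?_
  rw [(isSupportedAtZero_inv0 (isSupportedAtZero_Ugen i) μ ν).conv_apply_zero, inv0_apply_zero,
    del_Ugen_apply_zero, mul_ite, mul_zero, mul_left_comm, conj_Ugen_mul_self, mul_one]
end

section
/- Let U be a unitary in M₂(D) lifting to a unitary Ũ in a unital C*-algebra T mapping onto D, with Ũ = [[S⊗M₊ + S*⊗M₋, P⊗P₊],[P⊗Q₋, S*⊗M₊* + S⊗M₋*]] where S is the Toeplitz isometry (S*S = 1, SS* = 1-P), and M₊, M₋, P₊, P₋, Q₊, Q₋ satisfy the relations of Proposition 5.1 (M₊M₊* = P₊, M₊*M₊ = Q₊, M₋M₋* = P₋, M₋*M₋ = Q₋, P₊+P₋ = 1, Q₊+Q₋ = 1, M₊M₋* = M₊*M₋ = 0). Then Ũ·diag(1,0)·Ũ* = [[1⊗1 - P⊗P₊, 0],[0, P⊗Q₋]]. -/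
open Matrix
open scoped Matrix

/-! Only the first column of `Ũ` survives the compression by `diag(1, 0)`, so the four entries
are `A A*`, `A X*`, `X A*`, `X X*` for `A = S⊗M₊ + S*⊗M₋` and `X = P⊗Q₋`. Since the two
tensor factors commute, each is computed factorwise: the cross terms of `A A*` die by
`M₊M₋* = 0`, leaving `(1 - P)⊗P₊ + 1⊗P₋ = 1⊗1 - P⊗P₊`; `A X*` vanishes because `S*P = 0` and
`M₊Q₋ = M₊M₋*M₋ = 0`; and `X X* = P⊗Q₋` as both factors are projections. -/

theorem Matrix.fin_two_mul_diag_one_zero_mul_conjTranspose {α : Type*} [Semiring α] [StarRing α]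
    (a b c d : α) :
    !![a, b; c, d] * !![1, 0; 0, 0] * (!![a, b; c, d])ᴴ
      = !![a * star a, a * star c; c * star a, c * star c] := by
  ext i j
  fin_cases i <;> fin_cases j <;> simp [Matrix.mul_apply, Fin.sum_univ_two]

theorem star_mul_eq_zero_of_mul_star_eq_one_sub {R : Type*} [Ring R] [StarRing R] {S P : R}
    (hS : star S * S = 1) (hSS : S * star S = 1 - P) : star S * P = 0 := by
  rw [show P = 1 - S * star S by rw [hSS, sub_sub_cancel], mul_sub, mul_one, ← mul_assoc, hS,
    one_mul, sub_self]

section CommutingHoms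

variable {T B C : Type*}

theorem map_mul_map_mul_map_mul_map_of_commute [Semiring T] [Semiring B] [Semiring C]
    {jT : T →+* C} {jB : B →+* C} (hcomm : ∀ (t : T) (b : B), jT t * jB b = jB b * jT t)
    (a c : T) (b d : B) :
    jT a * jB b * (jT c * jB d) = jT (a * c) * jB (b * d) := by
  rw [mul_assoc, ← mul_assoc (jB b), ← hcomm, mul_assoc, ← mul_assoc, map_mul, map_mul]

theorem star_map_mul_map_of_commute [Semiring T] [StarRing T] [Semiring B] [StarRing B]
    [Semiring C] [StarRing C]
    {jT : T →+* C} {jB : B →+* C} (hjTstar : ∀ t : T, jT (star t) = star (jT t))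
    (hjBstar : ∀ b : B, jB (star b) = star (jB b))
    (hcomm : ∀ (t : T) (b : B), jT t * jB b = jB b * jT t) (a : T) (b : B) :
    star (jT a * jB b) = jT (star a) * jB (star b) := by
  rw [star_mul, ← hjTstar, ← hjBstar, hcomm]

end CommutingHoms

theorem stmt19_general
    (B : Type*) [Ring B] [StarRing B]
    (Mp Mm Pp Pm Qm : B)
    (hPp : Mp * star Mp = Pp)
    (hPm : Mm * star Mm = Pm) (hQm : star Mm * Mm = Qm)
    (hPsum : Pp + Pm = 1)
    (hQmsa : star Qm = Qm) (hQmidem : Qm * Qm = Qm)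
    (horth1 : Mp * star Mm = 0)
    (T : Type*) [Ring T] [StarRing T]
    (S P : T) (hS : star S * S = 1) (hSS : S * star S = 1 - P)
    (hPsa : star P = P) (hPidem : P * P = P)
    (C : Type*) [Ring C] [StarRing C]
    (jT : T →+* C) (hjTstar : ∀ t : T, jT (star t) = star (jT t))
    (jB : B →+* C) (hjBstar : ∀ b : B, jB (star b) = star (jB b))
    (hcomm : ∀ (t : T) (b : B), jT t * jB b = jB b * jT t) :
    let Utilde : Matrix (Fin 2) (Fin 2) C :=
      !![jT S * jB Mp + jT (star S) * jB Mm, jT P * jB Pp;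
         jT P * jB Qm, jT (star S) * jB (star Mp) + jT S * jB (star Mm)]
    Utilde * !![(1 : C), 0; 0, 0] * Utildeᴴ
      = !![jT 1 * jB 1 - jT P * jB Pp, 0; 0, jT P * jB Qm] := by
  intro Utilde
  have tensor_mul := map_mul_map_mul_map_mul_map_of_commute hcomm
  have star_tensor := star_map_mul_map_of_commute hjTstar hjBstar hcomm
  have hMmMp : Mm * star Mp = 0 := by simpa using congrArg star horth1
  have hMpQm : Mp * Qm = 0 := by rw [← hQm, ← mul_assoc, horth1, zero_mul]
  have hSP : star S * P = 0 := star_mul_eq_zero_of_mul_star_eq_one_sub hS hSS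
  set A := jT S * jB Mp + jT (star S) * jB Mm with hA
  set X := jT P * jB Qm with hX
  have hstarA : star A = jT (star S) * jB (star Mp) + jT S * jB (star Mm) := by
    rw [hA, star_add, star_tensor, star_tensor, star_star]
  have hstarX : star X = X := by rw [hX, star_tensor, hPsa, hQmsa]
  have hAA : A * star A = jT 1 * jB 1 - jT P * jB Pp := by
    rw [hstarA, hA, add_mul, mul_add, mul_add, tensor_mul, tensor_mul, tensor_mul, tensor_mul,
      hSS, hPp, horth1, hMmMp, hS, hPm, ← hPsum]
    simp only [map_sub, map_add, map_zero, mul_zero, sub_mul, mul_add]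
    abel
  have hAX : A * star X = 0 := by
    rw [hstarX, hA, hX, add_mul, tensor_mul, tensor_mul, hMpQm, hSP, map_zero, map_zero,
      mul_zero, zero_mul, add_zero]
  have hXA : X * star A = 0 := by
    simpa only [star_mul, star_star, star_zero] using congrArg star hAX
  have hXX : X * star X = X := by rw [hstarX, hX, tensor_mul, hPidem, hQmidem]
  rw [Matrix.fin_two_mul_diag_one_zero_mul_conjTranspose, hAA, hAX, hXA, hXX]

/-- With `S` the Toeplitz isometry (`S*S = 1`, `SS* = 1-P`) and
`M±, P±, Q±` satisfying the relations of Proposition 5.1, the unitary lift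
`Ũ = [[S⊗M₊ + S*⊗M₋, P⊗P₊],[P⊗Q₋, S*⊗M₊* + S⊗M₋*]]` satisfies
`Ũ·diag(1,0)·Ũ* = [[1⊗1 - P⊗P₊, 0],[0, P⊗Q₋]]`.  Elementary tensors `t ⊗ b` are
modelled as `jT t * jB b` in an ambient `*`-ring `C` with commuting `*`-homomorphisms
`jT`, `jB`. -/
theorem stmt19
    (B : Type*) [Ring B] [StarRing B]
    (Mp Mm Pp Pm Qp Qm : B)
    (hPp : Mp * star Mp = Pp) (hQp : star Mp * Mp = Qp)
    (hPm : Mm * star Mm = Pm) (hQm : star Mm * Mm = Qm)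
    (hPpsa : star Pp = Pp) (hPpidem : Pp * Pp = Pp)
    (hPmsa : star Pm = Pm) (hPmidem : Pm * Pm = Pm)
    (hPsum : Pp + Pm = 1)
    (hQpsa : star Qp = Qp) (hQpidem : Qp * Qp = Qp)
    (hQmsa : star Qm = Qm) (hQmidem : Qm * Qm = Qm)
    (hQsum : Qp + Qm = 1)
    (hPpMp : Pp * Mp = Mp) (hMpQp : Mp * Qp = Mp)
    (hPmMm : Pm * Mm = Mm) (hMmQm : Mm * Qm = Mm)
    (horth1 : Mp * star Mm = 0) (horth2 : star Mp * Mm = 0)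
    (T : Type*) [Ring T] [StarRing T]
    (S P : T) (hS : star S * S = 1) (hSS : S * star S = 1 - P)
    (hPsa : star P = P) (hPidem : P * P = P)
    (C : Type*) [Ring C] [StarRing C]
    (jT : T →+* C) (hjTstar : ∀ t : T, jT (star t) = star (jT t))
    (jB : B →+* C) (hjBstar : ∀ b : B, jB (star b) = star (jB b))
    (hcomm : ∀ (t : T) (b : B), jT t * jB b = jB b * jT t) :
    let Utilde : Matrix (Fin 2) (Fin 2) C :=
      !![jT S * jB Mp + jT (star S) * jB Mm, jT P * jB Pp;
         jT P * jB Qm, jT (star S) * jB (star Mp) + jT S * jB (star Mm)]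
    Utilde * !![(1 : C), 0; 0, 0] * Utildeᴴ
      = !![jT 1 * jB 1 - jT P * jB Pp, 0; 0, jT P * jB Qm] :=
  stmt19_general B Mp Mm Pp Pm Qm hPp hPm hQm hPsum hQmsa hQmidem horth1 T S P hS hSS hPsa hPidem C
    jT hjTstar jB hjBstar hcomm
end
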